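/- If a full triangulated subcategory D' of a triangulated category D is such that D is generated (as a triangulated category) by D' and its right orthogonal complement D'^⊥, then D' is admissible, i.e., the inclusion functor D' → D admits a right adjoint. -/

import Mathlib

open CategoryTheory Limits Pretriangulated ZeroObject

universe v u

namespace Triangulated

/-- The structure `Triangulated.Subcategory` of the older Mathlib (removed since),
restated verbatim with its original fields. -/
structure Subcategory (C : Type*) [Category C] [HasZeroObject C] [HasShift C ℤ]
    [Preadditive C] [∀ (n : ℤ), (shiftFunctor C n).Additive] [Pretriangulated C] where
  P : C → Prop
  zero' : ∃ (Z : C) (_ : IsZero Z), P Z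
  shift (X : C) (n : ℤ) : P X → P (X⟦n⟧)
  ext₂' (T : Triangle C) (_ : T ∈ distTriang C) : P T.obj₁ → P T.obj₃ →
    ObjectProperty.isoClosure P T.obj₂

end Triangulated

variable {C : Type u} [Category.{v} C] [HasZeroObject C] [HasShift C ℤ]
  [Preadditive C] [∀ (n : ℤ), (shiftFunctor C n).Additive] [Pretriangulated C]
  [IsTriangulated C]

/-- The right orthogonal complement of a subcategory: objects `A` such that
`Hom(B, A) = 0` for every `B` in the subcategory. -/
def rightOrthogonal (P : C → Prop) (A : C) : Prop :=
  ∀ (B : C), P B → ∀ (f : B ⟶ A), f = 0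

/-- A predicate is said to generate the triangulated category if the only triangulated
subcategory containing it is the whole category. -/
def GeneratesTriangulated (Q : C → Prop) : Prop :=
  ∀ (W : Triangulated.Subcategory C), (∀ X, Q X → W.P X) → ∀ X, W.P X

namespace AdmissibleAux

/-- Objects admitting a decomposition triangle `B ⟶ X ⟶ A ⟶ B⟦1⟧` with `B ∈ S` and
`A ∈ S^⊥`. -/
def Dec (S : Triangulated.Subcategory C) (X : C) : Prop :=
  ∃ (B A : C) (f : B ⟶ X) (g : X ⟶ A) (h : A ⟶ B⟦(1 : ℤ)⟧),
    (Triangle.mk f g h ∈ distTriang C) ∧ S.P B ∧ rightOrthogonal S.P A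

/-- The hom equivalence given by the shift adjunction. -/
noncomputable def shiftHomEquiv (n : ℤ) (B U : C) : (B⟦-n⟧ ⟶ U) ≃ (B ⟶ U⟦n⟧) :=
  ((shiftEquiv' C (-n) n (neg_add_cancel n)).toAdjunction).homEquiv B U

lemma shiftHomEquiv_comp (n : ℤ) (B : C) {U V : C} (α : U ⟶ V) (f : B⟦-n⟧ ⟶ U) :
    shiftHomEquiv n B V (f ≫ α) = shiftHomEquiv n B U f ≫ α⟦n⟧' :=
  Adjunction.homEquiv_naturality_right _ _ _

lemma shiftHomEquiv_zero (n : ℤ) (B U : C) : shiftHomEquiv n B U (0 : B⟦-n⟧ ⟶ U) = 0 := by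
  have := shiftHomEquiv_comp n B (0 : U ⟶ U) (0 : B⟦-n⟧ ⟶ U)
  rw [comp_zero] at this
  rw [this, Functor.map_zero, comp_zero]

variable {S : Triangulated.Subcategory C}

lemma orth_shift {A : C} (hA : rightOrthogonal S.P A) {B : C} (hB : S.P B) (n : ℤ)
    (f : B ⟶ A⟦n⟧) : f = 0 := by
  have h0 : (shiftHomEquiv n B A).symm f = 0 := hA _ (S.shift B (-n) hB) _
  have : f = shiftHomEquiv n B A ((shiftHomEquiv n B A).symm f) :=
    (Equiv.apply_symm_apply _ _).symm
  rw [this, h0, shiftHomEquiv_zero]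

lemma bij_shift {U V : C} (α : U ⟶ V)
    (h : ∀ B, S.P B → Function.Bijective (fun g : B ⟶ U => g ≫ α))
    (B : C) (hB : S.P B) (n : ℤ) :
    Function.Bijective (fun g : B ⟶ U⟦n⟧ => g ≫ α⟦n⟧') := by
  have key : (fun g : B ⟶ U⟦n⟧ => g ≫ α⟦n⟧')
      = (shiftHomEquiv n B V) ∘ (fun f : B⟦-n⟧ ⟶ U => f ≫ α) ∘ (shiftHomEquiv n B U).symm := by
    funext g
    simp only [Function.comp_apply]
    rw [shiftHomEquiv_comp, Equiv.apply_symm_apply]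
  rw [key]
  exact (Equiv.bijective _).comp ((h _ (S.shift B (-n) hB)).comp (Equiv.bijective _))

lemma bij_of_dec {B X A : C} {f : B ⟶ X} {g : X ⟶ A} {h : A ⟶ B⟦(1 : ℤ)⟧}
    (hT : Triangle.mk f g h ∈ distTriang C) (hB : S.P B) (hA : rightOrthogonal S.P A)
    (B' : C) (hB' : S.P B') :
    Function.Bijective (fun φ : B' ⟶ B => φ ≫ f) := by
  constructor
  · intro φ₁ φ₂ hφ
    have h0 : (φ₁ - φ₂) ≫ f = 0 := by
      rw [Preadditive.sub_comp, sub_eq_zero]; exact hφ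
    obtain ⟨χ, hχ⟩ := Triangle.coyoneda_exact₂ _ (inv_rot_of_distTriang _ hT) (φ₁ - φ₂) h0
    have hχ0 : χ = 0 := orth_shift hA hB' (-1) χ
    rw [hχ0, zero_comp] at hχ
    exact sub_eq_zero.mp hχ
  · intro φ
    obtain ⟨ψ, hψ⟩ := Triangle.coyoneda_exact₂ _ hT φ (hA _ hB' (φ ≫ g))
    exact ⟨ψ, hψ.symm⟩

lemma dec_of_bij {V Y : C} (hV : S.P V) (q : V ⟶ Y)
    (hq : ∀ B, S.P B → Function.Bijective (fun φ : B ⟶ V => φ ≫ q)) :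
    Dec S Y := by
  obtain ⟨A, r, s, hT⟩ := distinguished_cocone_triangle q
  refine ⟨V, A, q, r, s, hT, hV, ?_⟩
  intro B hB φ
  have h1 : (φ ≫ s) ≫ q⟦(1 : ℤ)⟧' = 0 := by
    have hz : s ≫ q⟦(1 : ℤ)⟧' = 0 := comp_distTriang_mor_zero₃₁ _ hT
    rw [Category.assoc, hz, comp_zero]
  have h2 : φ ≫ s = 0 := by
    apply (bij_shift q hq B hB 1).injective
    show (φ ≫ s) ≫ q⟦(1 : ℤ)⟧' = (0 : B ⟶ V⟦(1 : ℤ)⟧) ≫ q⟦(1 : ℤ)⟧'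
    rw [h1, zero_comp]
  obtain ⟨χ, hχ⟩ := Triangle.coyoneda_exact₃ _ hT φ h2
  obtain ⟨χ', hχ'⟩ := (hq B hB).surjective χ
  have hχ'' : χ' ≫ q = χ := hχ'
  have hz2 : q ≫ r = 0 := comp_distTriang_mor_zero₁₂ _ hT
  rw [hχ, ← hχ'']
  exact (Category.assoc _ _ _).trans ((whisker_eq χ' hz2).trans comp_zero)

lemma bij_mid {T₁ T₂ : Triangle C} (hT₁ : T₁ ∈ distTriang C) (hT₂ : T₂ ∈ distTriang C)
    (a : T₁.obj₁ ⟶ T₂.obj₁) (b : T₁.obj₂ ⟶ T₂.obj₂) (c : T₁.obj₃ ⟶ T₂.obj₃)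
    (comm₁ : T₁.mor₁ ≫ b = a ≫ T₂.mor₁) (comm₂ : T₁.mor₂ ≫ c = b ≫ T₂.mor₂)
    (comm₃ : T₁.mor₃ ≫ a⟦(1 : ℤ)⟧' = c ≫ T₂.mor₃)
    (ha : ∀ B, S.P B → Function.Bijective (fun φ : B ⟶ T₁.obj₁ => φ ≫ a))
    (hc : ∀ B, S.P B → Function.Bijective (fun φ : B ⟶ T₁.obj₃ => φ ≫ c))
    (B : C) (hB : S.P B) :
    Function.Bijective (fun φ : B ⟶ T₁.obj₂ => φ ≫ b) := by
  constructor
  · intro t₁ t₂ ht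
    have hs : (t₁ - t₂) ≫ b = 0 := by
      rw [Preadditive.sub_comp, sub_eq_zero]; exact ht
    have h1 : ((t₁ - t₂) ≫ T₁.mor₂) ≫ c = 0 := by
      rw [Category.assoc, comm₂, ← Category.assoc, hs, zero_comp]
    have h2 : (t₁ - t₂) ≫ T₁.mor₂ = 0 := by
      apply (hc B hB).injective
      show ((t₁ - t₂) ≫ T₁.mor₂) ≫ c = (0 : B ⟶ T₁.obj₃) ≫ c
      rw [h1, zero_comp]
    obtain ⟨r, hr⟩ := Triangle.coyoneda_exact₂ _ hT₁ _ h2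
    have h3 : (r ≫ a) ≫ T₂.mor₁ = 0 := by
      rw [Category.assoc, ← comm₁, ← Category.assoc, ← hr, hs]
    obtain ⟨m, hm⟩ := Triangle.coyoneda_exact₂ _ (inv_rot_of_distTriang _ hT₂) (r ≫ a) h3
    obtain ⟨m', hm'⟩ := (bij_shift c hc B hB (-1)).surjective m
    have hm'' : m' ≫ c⟦(-1 : ℤ)⟧' = m := hm'
    have nat : a⟦(1 : ℤ)⟧'⟦(-1 : ℤ)⟧' ≫ (shiftEquiv C (1 : ℤ)).unitIso.inv.app T₂.obj₁
        = (shiftEquiv C (1 : ℤ)).unitIso.inv.app T₁.obj₁ ≫ a :=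
      (shiftEquiv C (1 : ℤ)).unitIso.inv.naturality a
    have key : (m' ≫ T₁.invRotate.mor₁) ≫ a = m ≫ T₂.invRotate.mor₁ := by
      rw [← hm'']
      dsimp only [Triangle.invRotate, Triangle.mk]
      simp only [Preadditive.neg_comp, Preadditive.comp_neg, Category.assoc, neg_inj]
      have e1 : (shiftFunctor C (-1)).map T₁.mor₃ ≫ (shiftFunctor C (-1)).map (a⟦(1 : ℤ)⟧') =
          (shiftFunctor C (-1)).map c ≫ (shiftFunctor C (-1)).map T₂.mor₃ := by
        rw [← Functor.map_comp, comm₃, Functor.map_comp]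
      exact congrArg (m' ≫ ·) ((Category.assoc _ _ _).trans ((whisker_eq _ nat.symm).trans
        ((Category.assoc _ _ _).symm.trans ((eq_whisker e1 _).trans (Category.assoc _ _ _)))))
    have hr2 : r = m' ≫ T₁.invRotate.mor₁ := by
      apply (ha B hB).injective
      show r ≫ a = (m' ≫ T₁.invRotate.mor₁) ≫ a
      exact hm.trans key.symm
    have hz : T₁.invRotate.mor₁ ≫ T₁.mor₁ = 0 :=
      comp_distTriang_mor_zero₁₂ _ (inv_rot_of_distTriang _ hT₁)
    have : t₁ - t₂ = 0 := by
      rw [hr, hr2]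
      exact (Category.assoc _ _ _).trans ((whisker_eq m' hz).trans comp_zero)
    have := sub_eq_zero.mp this
    exact this
  · intro y
    obtain ⟨z, hz⟩ := (hc B hB).surjective (y ≫ T₂.mor₂)
    have hz' : z ≫ c = y ≫ T₂.mor₂ := hz
    have h1 : (z ≫ T₁.mor₃) ≫ a⟦(1 : ℤ)⟧' = 0 := by
      rw [Category.assoc, comm₃, ← Category.assoc, hz', Category.assoc,
        comp_distTriang_mor_zero₂₃ _ hT₂, comp_zero]
    have h2 : z ≫ T₁.mor₃ = 0 := by
      apply (bij_shift a ha B hB 1).injective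
      show (z ≫ T₁.mor₃) ≫ a⟦(1 : ℤ)⟧' = (0 : B ⟶ T₁.obj₁⟦(1 : ℤ)⟧) ≫ a⟦(1 : ℤ)⟧'
      rw [h1, zero_comp]
    obtain ⟨z', hz''⟩ := Triangle.coyoneda_exact₃ _ hT₁ z h2
    have h3 : (y - z' ≫ b) ≫ T₂.mor₂ = 0 := by
      rw [Preadditive.sub_comp, Category.assoc, ← comm₂, ← Category.assoc, ← hz'', hz', sub_self]
    obtain ⟨x, hx⟩ := Triangle.coyoneda_exact₂ _ hT₂ _ h3
    obtain ⟨x', hx'⟩ := (ha B hB).surjective x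
    have hx'' : x' ≫ a = x := hx'
    refine ⟨z' + x' ≫ T₁.mor₁, ?_⟩
    show (z' + x' ≫ T₁.mor₁) ≫ b = y
    rw [Preadditive.add_comp, Category.assoc, comm₁, ← Category.assoc, hx'', ← hx]
    abel

lemma dec_of_mem {X : C} (hX : S.P X) : Dec S X :=
  ⟨X, 0, 𝟙 X, 0, 0, contractible_distinguished X, hX,
    fun _ _ f => (isZero_zero C).eq_zero_of_tgt f⟩

lemma dec_of_orth {X : C} (hX : rightOrthogonal S.P X) : Dec S X := by
  obtain ⟨Z, hZ, hZP⟩ := S.zero'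
  refine ⟨Z, X, 0, 𝟙 X, 0, ?_, hZP, hX⟩
  refine isomorphic_distinguished _ (contractible_distinguished₁ X) _ ?_
  exact Triangle.isoMk _ _ hZ.isoZero (Iso.refl _) (Iso.refl _) (hZ.eq_of_src _ _)
    ((Category.comp_id _).trans (Category.id_comp _).symm) (zero_comp.trans comp_zero.symm)

lemma dec_zero : Dec S (0 : C) :=
  dec_of_orth (fun _ _ f => (isZero_zero C).eq_zero_of_tgt f)

lemma dec_shift {X : C} (hX : Dec S X) (n : ℤ) : Dec S (X⟦n⟧) := by
  obtain ⟨B, A, f, g, h, hT, hB, hA⟩ := hX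
  refine ⟨B⟦n⟧, A⟦n⟧, ((Triangle.shiftFunctor C n).obj (Triangle.mk f g h)).mor₁,
    ((Triangle.shiftFunctor C n).obj (Triangle.mk f g h)).mor₂,
    ((Triangle.shiftFunctor C n).obj (Triangle.mk f g h)).mor₃, ?_,
    S.shift B n hB, fun B' hB' φ => orth_shift hA hB' n φ⟩
  exact Triangle.shift_distinguished _ hT n

lemma dec_ext₂ (T : Triangle C) (hT : T ∈ distTriang C)
    (h₁ : Dec S T.obj₁) (h₃ : Dec S T.obj₃) : Dec S T.obj₂ := by
  obtain ⟨B₁, A₁, f₁, g₁, h₁', hT₁, hB₁, hA₁⟩ := h₁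
  obtain ⟨B₃, A₃, f₃, g₃, h₃', hT₃, hB₃, hA₃⟩ := h₃
  -- factor `f₃ ≫ T.mor₃` through `f₁⟦1⟧`
  have hrot := rot_of_distTriang _ (rot_of_distTriang _ (rot_of_distTriang _ hT₁))
  have hzero : (f₃ ≫ T.mor₃) ≫ (((Triangle.mk f₁ g₁ h₁').rotate.rotate.rotate).mor₂) = 0 := by
    show (f₃ ≫ T.mor₃) ≫ (-(g₁⟦(1 : ℤ)⟧')) = 0
    rw [Preadditive.comp_neg, neg_eq_zero]
    exact orth_shift hA₁ hB₃ 1 _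
  obtain ⟨γ, hγ⟩ := Triangle.coyoneda_exact₂ _ hrot (f₃ ≫ T.mor₃) hzero
  have hβ : (-γ) ≫ f₁⟦(1 : ℤ)⟧' = f₃ ≫ T.mor₃ := by
    refine Eq.trans ?_ hγ.symm
    show (-γ) ≫ f₁⟦(1 : ℤ)⟧' = γ ≫ (-(f₁⟦(1 : ℤ)⟧'))
    exact (Preadditive.neg_comp _ _).trans (Preadditive.comp_neg _ _).symm
  obtain ⟨E, a, b, hTE⟩ := distinguished_cocone_triangle₂ (-γ)
  obtain ⟨e, he₁, he₂⟩ := complete_distinguished_triangle_morphism₂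
    (Triangle.mk a b (-γ)) T hTE hT f₁ f₃ hβ
  obtain ⟨E', hE', ⟨ψ⟩⟩ := S.ext₂' (Triangle.mk a b (-γ)) hTE hB₁ hB₃
  have hbije : ∀ B, S.P B → Function.Bijective (fun φ : B ⟶ E => φ ≫ e) :=
    fun B hB => bij_mid hTE hT f₁ e f₃ he₁ he₂ hβ
      (fun B' hB' => bij_of_dec hT₁ hB₁ hA₁ B' hB')
      (fun B' hB' => bij_of_dec hT₃ hB₃ hA₃ B' hB') B hB
  have hbije' : ∀ B, S.P B → Function.Bijective (fun φ : B ⟶ E' => φ ≫ (ψ.inv ≫ e)) := by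
    intro B hB
    have heq : (fun φ : B ⟶ E' => φ ≫ (ψ.inv ≫ e))
        = (fun φ : B ⟶ E => φ ≫ e) ∘ (fun φ : B ⟶ E' => φ ≫ ψ.inv) := by
      funext φ
      simp [Function.comp]
      exact (Category.assoc _ _ _).symm
    rw [heq]
    exact (hbije B hB).comp
      (Equiv.bijective ⟨fun φ => φ ≫ ψ.inv, fun φ => φ ≫ ψ.hom,
        fun φ => by simp, fun φ => by simp⟩)
  exact dec_of_bij hE' (ψ.inv ≫ e) hbije'

end AdmissibleAux

open AdmissibleAux

/-- If a triangulated category `C` is generated by a full triangulated subcategory `D'`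
together with its right orthogonal complement `D'^⊥`, then `D'` is admissible, i.e. the
inclusion functor `D' → C` admits a right adjoint. -/
theorem admissible_of_generates (S : Triangulated.Subcategory C)
    (hgen : GeneratesTriangulated (fun X => S.P X ∨ rightOrthogonal S.P X)) :
    (ObjectProperty.ι S.P).IsLeftAdjoint := by
  have hdec : ∀ X : C, Dec S X := by
    intro X
    exact hgen ⟨Dec S, ⟨0, isZero_zero C, dec_zero⟩,
      (fun Y n hY => dec_shift hY n),
      (fun T hT h₁ h₃ => ObjectProperty.le_isoClosure _ _ (dec_ext₂ T hT h₁ h₃))⟩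
      (fun Y hY => hY.elim dec_of_mem dec_of_orth) X
  have : ∀ X : C, HasTerminal (CostructuredArrow (ObjectProperty.ι S.P) X) := by
    intro X
    obtain ⟨B, A, f, g, h, hT, hB, hA⟩ := hdec X
    have hbij := bij_of_dec hT hB hA
    have ht : IsTerminal (CostructuredArrow.mk
        (Y := (⟨B, hB⟩ : ObjectProperty.FullSubcategory S.P)) (S := ObjectProperty.ι S.P) f) := by
      refine IsTerminal.ofUniqueHom
        (fun W => CostructuredArrow.homMk
          (ObjectProperty.homMk ((hbij W.left.obj W.left.property).surjective W.hom).choose)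
          (((hbij W.left.obj W.left.property).surjective W.hom).choose_spec)) ?_
      intro W m
      apply CostructuredArrow.hom_ext
      apply ObjectProperty.hom_ext
      apply (hbij W.left.obj W.left.property).injective
      exact (CostructuredArrow.w m).trans
        (((hbij W.left.obj W.left.property).surjective W.hom).choose_spec).symm
    exact ht.hasTerminal
  exact isLeftAdjoint_of_costructuredArrowTerminals _
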